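/- Let ω, λ, μ ∈ ℝ and suppose V(r) ≥ 0 for all r ∈ (r₊, ∞). If R : (r₊, ∞) → ℂ is a C² solution of the radial ODE that extends to a C¹ function on [r₊, ∞) and decays exponentially at infinity, then R is identically zero. -/

import Mathlib

/-!
Put `p = Δ` and `q = V / Δ`, so that the radial equation reads `(p R')' = q R`
with `p > 0` and `q ≥ 0` on `(r₊, ∞)`. The flux `Re (p R' R̄)` then has derivative
`q |R|² + p |R'|² ≥ 0`, so it is monotone. It tends to `0` at `r₊` (because `Δ(r₊) = 0` and `R` is
`C¹` up to `r₊`) and at infinity (exponential decay beats the quadratic growth of `Δ`), hence it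
vanishes identically, and so does its derivative. This forces `R' = 0`, so `R` is constant, and
the decay makes the constant zero.
-/

open Real Set MeasureTheory Filter Topology ComplexConjugate

/-- The larger root `r₊ = M + √(M² − a²)`. -/
noncomputable def rPlus (M a : ℝ) : ℝ := M + Real.sqrt (M ^ 2 - a ^ 2)

/-- The smaller root `r₋ = M − √(M² − a²)`. -/
noncomputable def rMinus (M a : ℝ) : ℝ := M - Real.sqrt (M ^ 2 - a ^ 2)

/-- `Δ(r) = (r − r₊)(r − r₋)`. -/
noncomputable def Delta (M a r : ℝ) : ℝ := (r - rPlus M a) * (r - rMinus M a)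

/-- The radial potential with real parameters `ω, λ, μ`. -/
noncomputable def Vpot (M a : ℝ) (m : ℤ) (ω lam μ r : ℝ) : ℝ :=
  -(r ^ 2 + a ^ 2) ^ 2 * ω ^ 2 + 4 * M * a * m * r * ω - a ^ 2 * m ^ 2
    + Delta M a r * (lam + a ^ 2 * ω ^ 2 + μ ^ 2 * r ^ 2)

/-- The radial ODE `Δ (Δ R')' − V R = 0` on `(r₊, ∞)`. -/
def RadialODE (M a : ℝ) (m : ℤ) (ω lam μ : ℝ) (R : ℝ → ℂ) : Prop :=
  ∀ r ∈ Ioi (rPlus M a),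
    (Delta M a r : ℂ) * deriv (fun s => (Delta M a s : ℂ) * deriv R s) r
      - (Vpot M a m ω lam μ r : ℂ) * R r = 0

/-- Exponential decay at infinity of `h` together with its derivative. -/
def ExpDecay (rp : ℝ) (h : ℝ → ℂ) : Prop :=
  ∃ C c : ℝ, 0 < C ∧ 0 < c ∧ ∀ r : ℝ, rp + 1 ≤ r →
    ‖h r‖ + ‖deriv h r‖ ≤ C * Real.exp (-c * r)

noncomputable def flux (p : ℝ → ℝ) (u : ℝ → ℂ) (s : ℝ) : ℝ :=
  ((p s : ℂ) * deriv u s * conj (u s)).re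

theorem abs_flux_le (p : ℝ → ℝ) (u : ℝ → ℂ) (s : ℝ) :
    |flux p u s| ≤ |p s| * ‖deriv u s‖ * ‖u s‖ :=
  (Complex.abs_re_le_norm _).trans_eq (by simp)

theorem hasDerivAt_flux {p q : ℝ → ℝ} {u : ℝ → ℂ} {x : ℝ} (hu : DifferentiableAt ℝ u x)
    (hpu : HasDerivAt (fun s => (p s : ℂ) * deriv u s) (q x * u x) x) :
    HasDerivAt (flux p u) (q x * Complex.normSq (u x) + p x * Complex.normSq (deriv u x)) x := by
  have hconj : HasDerivAt (fun s => conj (u s)) (conj (deriv u x)) x := hu.hasDerivAt.star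
  have h : HasDerivAt (flux p u) _ x :=
    Complex.reCLM.hasFDerivAt.comp_hasDerivAt x (hpu.mul hconj)
  convert h using 1
  simp [mul_assoc, Complex.mul_conj]

theorem MonotoneOn.eq_of_tendsto_nhdsGT_of_tendsto_atTop {f : ℝ → ℝ} {x₀ L : ℝ}
    (hf : MonotoneOn f (Ioi x₀)) (h₀ : Tendsto f (𝓝[>] x₀) (𝓝 L))
    (hTop : Tendsto f atTop (𝓝 L)) : ∀ x ∈ Ioi x₀, f x = L := by
  intro x hx
  apply le_antisymm
  · refine ge_of_tendsto hTop ?_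
    filter_upwards [eventually_ge_atTop x] with s hs
    exact hf hx (lt_of_lt_of_le hx hs) hs
  · refine le_of_tendsto h₀ ?_
    filter_upwards [Ioo_mem_nhdsGT hx] with s hs
    exact hf hs.1 hx hs.2.le

theorem deriv_eq_zero_of_tendsto_flux {p q : ℝ → ℝ} {u : ℝ → ℂ} {x₀ : ℝ}
    (hp : ∀ x ∈ Ioi x₀, 0 < p x) (hq : ∀ x ∈ Ioi x₀, 0 ≤ q x)
    (hu : ∀ x ∈ Ioi x₀, DifferentiableAt ℝ u x)
    (hode : ∀ x ∈ Ioi x₀, HasDerivAt (fun s => (p s : ℂ) * deriv u s) (q x * u x) x)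
    (h₀ : Tendsto (flux p u) (𝓝[>] x₀) (𝓝 0)) (hTop : Tendsto (flux p u) atTop (𝓝 0)) :
    ∀ x ∈ Ioi x₀, deriv u x = 0 := by
  have hderiv x (hx : x ∈ Ioi x₀) := hasDerivAt_flux (hu x hx) (hode x hx)
  have hterm₁ x (hx : x ∈ Ioi x₀) : 0 ≤ q x * Complex.normSq (u x) :=
    mul_nonneg (hq x hx) (Complex.normSq_nonneg _)
  have hterm₂ x (hx : x ∈ Ioi x₀) : 0 ≤ p x * Complex.normSq (deriv u x) :=
    mul_nonneg (hp x hx).le (Complex.normSq_nonneg _)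
  have hmono : MonotoneOn (flux p u) (Ioi x₀) := by
    refine monotoneOn_of_deriv_nonneg (convex_Ioi x₀)
      (fun x hx => (hderiv x hx).continuousAt.continuousWithinAt) ?_ ?_ <;> rw [interior_Ioi]
    · exact fun x hx => (hderiv x hx).differentiableAt.differentiableWithinAt
    · exact fun x hx => (hderiv x hx).deriv ▸ add_nonneg (hterm₁ x hx) (hterm₂ x hx)
  have hflux := hmono.eq_of_tendsto_nhdsGT_of_tendsto_atTop h₀ hTop
  intro x hx
  have hzero : q x * Complex.normSq (u x) + p x * Complex.normSq (deriv u x) = 0 := by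
    refine (hderiv x hx).unique ((hasDerivAt_const x (0 : ℝ)).congr_of_eventuallyEq ?_)
    filter_upwards [isOpen_Ioi.mem_nhds hx] with s hs using hflux s hs
  have : p x * Complex.normSq (deriv u x) = 0 := by linarith [hterm₁ x hx, hterm₂ x hx]
  simpa [(hp x hx).ne'] using this

theorem eq_zero_of_deriv_eq_zero_of_tendsto {u : ℝ → ℂ} {x₀ : ℝ}
    (hu : ∀ x ∈ Ioi x₀, DifferentiableAt ℝ u x) (hu' : ∀ x ∈ Ioi x₀, deriv u x = 0)
    (hlim : Tendsto u atTop (𝓝 0)) : ∀ x ∈ Ioi x₀, u x = 0 := by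
  intro x hx
  refine tendsto_nhds_unique (tendsto_const_nhds.congr' ?_) hlim
  filter_upwards [eventually_gt_atTop x₀] with s hs
  exact isOpen_Ioi.is_const_of_deriv_eq_zero isPreconnected_Ioi
    (fun y hy => (hu y hy).differentiableWithinAt) hu' hx hs

theorem tendsto_flux_nhdsGT {p : ℝ → ℝ} {u : ℝ → ℂ} {x₀ : ℝ}
    (hp : Tendsto p (𝓝[>] x₀) (𝓝 0)) (hu : ContDiffOn ℝ 1 u (Ici x₀)) :
    Tendsto (flux p u) (𝓝[>] x₀) (𝓝 0) := by
  have hu' : Tendsto (deriv u) (𝓝[>] x₀) (𝓝 (derivWithin u (Ici x₀) x₀)) := by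
    refine ((hu.continuousOn_derivWithin (uniqueDiffOn_Ici x₀) le_rfl x₀ self_mem_Ici).mono_left
      (nhdsWithin_mono x₀ Ioi_subset_Ici_self)).congr' ?_
    filter_upwards [self_mem_nhdsWithin] with s hs
    exact derivWithin_of_mem_nhds (Ici_mem_nhds hs)
  have hu₀ : Tendsto u (𝓝[>] x₀) (𝓝 (u x₀)) :=
    (hu.continuousOn x₀ self_mem_Ici).mono_left (nhdsWithin_mono x₀ Ioi_subset_Ici_self)
  have h := (Complex.continuous_re.tendsto _).comp
    (((Complex.continuous_ofReal.tendsto 0).comp hp).mul hu' |>.mul (hu₀.star))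
  rw [Complex.ofReal_zero, zero_mul, zero_mul, Complex.zero_re] at h
  exact h

theorem tendsto_sub_mul_exp_neg_mul (k : ℝ) {c : ℝ} (hc : 0 < c) :
    Tendsto (fun s => (s - k) * exp (-c * s)) atTop (𝓝 0) := by
  have h := (tendsto_rpow_mul_exp_neg_mul_atTop_nhds_zero 1 c hc).sub
    ((tendsto_rpow_mul_exp_neg_mul_atTop_nhds_zero 0 c hc).const_mul k)
  simpa [sub_mul] using h

theorem ExpDecay.tendsto_atTop {x₀ : ℝ} {u : ℝ → ℂ} (hu : ExpDecay x₀ u) :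
    Tendsto u atTop (𝓝 0) := by
  obtain ⟨C, c, -, hc, hbound⟩ := hu
  refine squeeze_zero_norm' ?_
    (by simpa only [rpow_zero, one_mul, mul_zero] using
      (tendsto_rpow_mul_exp_neg_mul_atTop_nhds_zero 0 c hc).const_mul C)
  filter_upwards [eventually_ge_atTop (x₀ + 1)] with s hs
  linarith [hbound s hs, norm_nonneg (deriv u s)]

theorem ExpDecay.tendsto_flux_atTop {x₀ : ℝ} {u : ℝ → ℂ} (hu : ExpDecay x₀ u) (k₁ k₂ : ℝ) :
    Tendsto (flux (fun s => (s - k₁) * (s - k₂)) u) atTop (𝓝 0) := by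
  obtain ⟨C, c, hC, hc, hbound⟩ := hu
  have hlim := ((tendsto_sub_mul_exp_neg_mul k₁ hc).mul
    (tendsto_sub_mul_exp_neg_mul k₂ hc)).const_mul (C * C)
  rw [mul_zero, mul_zero] at hlim
  refine squeeze_zero_norm' ?_ hlim
  filter_upwards [eventually_ge_atTop (x₀ + 1), eventually_ge_atTop k₁,
    eventually_ge_atTop k₂] with s hs hs₁ hs₂
  have hu' : ‖deriv u s‖ ≤ C * exp (-c * s) := by linarith [hbound s hs, norm_nonneg (u s)]
  have hu₀ : ‖u s‖ ≤ C * exp (-c * s) := by linarith [hbound s hs, norm_nonneg (deriv u s)]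
  calc ‖flux (fun s => (s - k₁) * (s - k₂)) u s‖
      ≤ |(s - k₁) * (s - k₂)| * ‖deriv u s‖ * ‖u s‖ := abs_flux_le _ _ _
    _ ≤ ((s - k₁) * (s - k₂)) * (C * exp (-c * s)) * (C * exp (-c * s)) := by
        rw [abs_of_nonneg (by nlinarith)]
        gcongr
    _ = C * C * ((s - k₁) * exp (-c * s) * ((s - k₂) * exp (-c * s))) := by ring

theorem Delta_pos {M a r : ℝ} (hr : r ∈ Ioi (rPlus M a)) : 0 < Delta M a r := by
  have hle : rMinus M a ≤ rPlus M a := by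
    unfold rMinus rPlus; linarith [Real.sqrt_nonneg (M ^ 2 - a ^ 2)]
  exact mul_pos (sub_pos.2 hr) (sub_pos.2 (hle.trans_lt hr))

theorem differentiable_Delta (M a : ℝ) : Differentiable ℝ (Delta M a) :=
  (differentiable_id.sub_const _).mul (differentiable_id.sub_const _)

theorem tendsto_Delta_nhdsGT (M a : ℝ) : Tendsto (Delta M a) (𝓝[>] rPlus M a) (𝓝 0) := by
  have h₀ : Delta M a (rPlus M a) = 0 := by simp [Delta]
  exact h₀ ▸ (differentiable_Delta M a).continuous.continuousWithinAt

theorem RadialODE.hasDerivAt {M a : ℝ} {m : ℤ} {ω lam μ r : ℝ} {R : ℝ → ℂ}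
    (hR : RadialODE M a m ω lam μ R) (hr : r ∈ Ioi (rPlus M a))
    (hdiff : DifferentiableAt ℝ (fun s => (Delta M a s : ℂ) * deriv R s) r) :
    HasDerivAt (fun s => (Delta M a s : ℂ) * deriv R s)
      ((Vpot M a m ω lam μ r / Delta M a r : ℝ) * R r) r := by
  have hΔ : (Delta M a r : ℂ) ≠ 0 := by exact_mod_cast (Delta_pos hr).ne'
  refine hdiff.hasDerivAt.congr_deriv ?_
  rw [Complex.ofReal_div, div_mul_eq_mul_div, eq_div_iff hΔ, mul_comm]
  exact sub_eq_zero.1 (hR r hr)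

theorem stmt2_general (M a : ℝ) (m : ℤ)
    (ω lam μ : ℝ)
    (hV : ∀ r ∈ Ioi (rPlus M a), 0 ≤ Vpot M a m ω lam μ r)
    (R : ℝ → ℂ)
    (hC2 : ContDiffOn ℝ 2 R (Ioi (rPlus M a)))
    (hODE : RadialODE M a m ω lam μ R)
    (hC1 : ContDiffOn ℝ 1 R (Ici (rPlus M a)))
    (hdecay : ExpDecay (rPlus M a) R) :
    ∀ r ∈ Ioi (rPlus M a), R r = 0 := by
  have hR x (hx : x ∈ Ioi (rPlus M a)) : DifferentiableAt ℝ R x :=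
    hC2.differentiableOn (by norm_num) x hx |>.differentiableAt (isOpen_Ioi.mem_nhds hx)
  have hR' x (hx : x ∈ Ioi (rPlus M a)) : DifferentiableAt ℝ (deriv R) x :=
    (hC2.deriv_of_isOpen (m := 1) isOpen_Ioi (by norm_num)).differentiableOn (by norm_num) x hx
      |>.differentiableAt (isOpen_Ioi.mem_nhds hx)
  have hode x (hx : x ∈ Ioi (rPlus M a)) :=
    hODE.hasDerivAt hx ((Complex.ofRealCLM.differentiableAt.comp x
      (differentiable_Delta M a x)).mul (hR' x hx))
  refine eq_zero_of_deriv_eq_zero_of_tendsto hR ?_ hdecay.tendsto_atTop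
  exact deriv_eq_zero_of_tendsto_flux (fun x hx => Delta_pos hx)
    (fun x hx => div_nonneg (hV x hx) (Delta_pos hx).le) hR hode
    (tendsto_flux_nhdsGT (tendsto_Delta_nhdsGT M a) hC1)
    (hdecay.tendsto_flux_atTop (rPlus M a) (rMinus M a))

/-- if the potential `V` is everywhere nonnegative on `(r₊, ∞)`, then any C²
solution of the radial ODE extending C¹ to `[r₊, ∞)` and decaying exponentially vanishes. -/
theorem stmt2 (M a : ℝ) (hM : 0 < M) (ha : |a| < M) (m : ℤ)
    (ω lam μ : ℝ)
    (hV : ∀ r ∈ Ioi (rPlus M a), 0 ≤ Vpot M a m ω lam μ r)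
    (R : ℝ → ℂ)
    (hC2 : ContDiffOn ℝ 2 R (Ioi (rPlus M a)))
    (hODE : RadialODE M a m ω lam μ R)
    (hC1 : ContDiffOn ℝ 1 R (Ici (rPlus M a)))
    (hdecay : ExpDecay (rPlus M a) R) :
    ∀ r ∈ Ioi (rPlus M a), R r = 0 :=
  stmt2_general M a m ω lam μ hV R hC2 hODE hC1 hdecay
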